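/- Fix an integer s ≥ 2. Let X_1, X_2, … be an i.i.d. sequence of random variables with the Hill-horror distribution HH(α), α > 0, and for each i ∈ ℕ let Q_{i,s}^{HH*} = [log(X_{(is, i(s+1)−1)}/X_{(i, i(s+1)−1)}) + log(1 − log(s)/log(s+1))]/log(s) be computed from the first n = i(s+1)−1 observations. Then Q_{i,s}^{HH*} converges almost surely to 1/α as i → ∞. -/

import Mathlib

/-!
The strong law of large numbers, applied to the indicators of `X_j ≤ t`, makes the empirical
distribution function converge almost surely to the true one, simultaneously at all rational
levels `q ρ` of the quantile function `q`. Since the `k`-th order statistic of `n` observations is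
`≤ t` exactly when `k / n` is at most the empirical distribution function at `t`, the sample
quantile `X_{(k,n)}` converges almost surely to `q p` whenever `k / n → p` and `q` is continuous
at `p`. For `n = i(s+1) - 1` the two order statistics tend to `q (s/(s+1))` and `q (1/(s+1))`,
whose ratio for the Hill-horror quantile is `log(s+1) / (log(s+1) - log s) · s^{1/α}`; the
correction `log (1 - log s / log (s+1))` cancels the first factor, leaving `(log s) / α`.
-/

open MeasureTheory ProbabilityTheory Real Filter

/-- The `k`-th order statistic (1-based indexing) of the sample `x : Fin n → ℝ`. -/
noncomputable def orderStat (n : ℕ) (x : Fin n → ℝ) (k : ℕ) : ℝ :=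
  (Multiset.sort ((List.ofFn x : List ℝ) : Multiset ℝ) (· ≤ ·)).getD (k - 1) 0

/-- The quantile function of the Hill-horror distribution `HH(α)`. -/
noncomputable def hillHorrorQuantile (α : ℝ) (p : ℝ) : ℝ :=
  -Real.log (1 - p) / (1 - p) ^ (1 / α)

open Topology Finset

theorem List.SortedLE.getElem_le_iff_lt_countP {α : Type*} [LinearOrder α] {l : List α}
    (hl : l.SortedLE) {k : ℕ} (hk : k < l.length) (t : α) :
    l[k] ≤ t ↔ k < l.countP (· ≤ t) := by
  constructor
  · intro h
    have hprefix : ∀ a ∈ l.take (k + 1), a ≤ t := by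
      intro a ha
      obtain ⟨i, hi, rfl⟩ := List.mem_iff_getElem.mp ha
      rw [List.getElem_take]
      exact (hl.getElem_le_getElem_of_le (by simp at hi; omega)).trans h
    calc k < (l.take (k + 1)).length := by simp; omega
      _ = (l.take (k + 1)).countP (· ≤ t) :=
          (List.countP_eq_length.mpr (by simpa using hprefix)).symm
      _ ≤ l.countP (· ≤ t) := (l.take_sublist _).countP_le
  · intro h
    by_contra! hlt
    have hsuffix : (l.drop k).countP (· ≤ t) = 0 := by
      refine List.countP_eq_zero.mpr fun a ha => ?_
      obtain ⟨i, hi, rfl⟩ := List.mem_iff_getElem.mp ha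
      rw [List.getElem_drop]
      simpa using hlt.trans_le (hl.getElem_le_getElem_of_le (by omega))
    have hprefix := (l.take k).countP_le_length (p := (· ≤ t))
    rw [← l.take_append_drop k, List.countP_append, hsuffix] at h
    simp at hprefix
    omega

theorem orderStat_le_iff {n : ℕ} (x : Fin n → ℝ) {k : ℕ} (hk1 : 1 ≤ k) (hkn : k ≤ n) (t : ℝ) :
    orderStat n x k ≤ t ↔ k ≤ #{j | x j ≤ t} := by
  set l := Multiset.sort ((List.ofFn x : List ℝ) : Multiset ℝ) (· ≤ ·)
  have hlen : l.length = n := by simp [l]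
  have hcount : l.countP (· ≤ t) = #{j | x j ≤ t} := by
    rw [← Multiset.coe_countP, Multiset.sort_eq, ← Fin.univ_val_map, Multiset.countP_map,
      Finset.card_def, Finset.filter_val]
  have hget : orderStat n x k = l[k - 1] := List.getD_eq_getElem _ _ _
  rw [hget, (Multiset.pairwise_sort _ _).sortedLE.getElem_le_iff_lt_countP, hcount]
  omega

noncomputable def empiricalCDF (x : ℕ → ℝ) (n : ℕ) (t : ℝ) : ℝ :=
  #{j : Fin n | x j ≤ t} / n

theorem orderStat_le_iff_div_le_empiricalCDF (x : ℕ → ℝ) {n k : ℕ} (hk1 : 1 ≤ k) (hkn : k ≤ n)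
    (t : ℝ) : orderStat n (fun j => x j) k ≤ t ↔ (k : ℝ) / n ≤ empiricalCDF x n t := by
  rw [orderStat_le_iff _ hk1 hkn, empiricalCDF,
    div_le_div_iff_of_pos_right (by exact_mod_cast (hk1.trans hkn : 1 ≤ n)), Nat.cast_le]

section SampleQuantile

variable {ι : Type*} {l : Filter ι} {n k : ι → ℕ} {p : ℝ}

theorem eventually_one_le_and_le_of_tendsto_div (hp : p ∈ Set.Ioo 0 1)
    (hratio : Tendsto (fun i => (k i : ℝ) / n i) l (𝓝 p)) :
    ∀ᶠ i in l, 1 ≤ k i ∧ k i ≤ n i := by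
  filter_upwards [hratio.eventually (Ioo_mem_nhds hp.1 hp.2)] with i ⟨hpos, hlt⟩
  have hn : (0 : ℝ) < n i := by
    by_contra! h
    simp [le_antisymm h (Nat.cast_nonneg _)] at hpos
  have hk : k i ≠ 0 := by rintro h; simp [h] at hpos
  have := (div_lt_one hn).mp hlt
  exact ⟨Nat.one_le_iff_ne_zero.mpr hk, by exact_mod_cast this.le⟩

variable {x : ℕ → ℝ} {t ρ : ℝ}

theorem eventually_orderStat_le (hk : ∀ᶠ i in l, 1 ≤ k i ∧ k i ≤ n i)
    (hratio : Tendsto (fun i => (k i : ℝ) / n i) l (𝓝 p))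
    (hF : Tendsto (fun i => empiricalCDF x (n i) t) l (𝓝 ρ)) (hpρ : p < ρ) :
    ∀ᶠ i in l, orderStat (n i) (fun j => x j) (k i) ≤ t := by
  filter_upwards [hk, hratio.eventually_lt hF hpρ] with i ⟨hk1, hkn⟩ hi
  exact (orderStat_le_iff_div_le_empiricalCDF x hk1 hkn t).mpr hi.le

theorem eventually_lt_orderStat (hk : ∀ᶠ i in l, 1 ≤ k i ∧ k i ≤ n i)
    (hratio : Tendsto (fun i => (k i : ℝ) / n i) l (𝓝 p))
    (hF : Tendsto (fun i => empiricalCDF x (n i) t) l (𝓝 ρ)) (hρp : ρ < p) :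
    ∀ᶠ i in l, t < orderStat (n i) (fun j => x j) (k i) := by
  filter_upwards [hk, hF.eventually_lt hratio hρp] with i ⟨hk1, hkn⟩ hi
  exact lt_of_not_ge fun h => (orderStat_le_iff_div_le_empiricalCDF x hk1 hkn t).mp h |>.not_gt hi

theorem tendsto_orderStat_of_tendsto_empiricalCDF {q : ℝ → ℝ} (hp : p ∈ Set.Ioo 0 1)
    (hq : ContinuousAt q p)
    (hF : ∀ ρ : ℚ, (ρ : ℝ) ∈ Set.Ioo 0 1 → Tendsto (empiricalCDF x · (q ρ)) atTop (𝓝 ρ))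
    (hn : Tendsto n l atTop) (hratio : Tendsto (fun i => (k i : ℝ) / n i) l (𝓝 p)) :
    Tendsto (fun i => orderStat (n i) (fun j => x j) (k i)) l (𝓝 (q p)) := by
  have hk := eventually_one_le_and_le_of_tendsto_div hp hratio
  have hnear : ∀ {U : Set ℝ}, U ∈ 𝓝 (q p) → q ⁻¹' U ∩ Set.Ioo 0 1 ∈ 𝓝 p := fun hU =>
    inter_mem (hq hU) (Ioo_mem_nhds hp.1 hp.2)
  rw [tendsto_order]
  constructor
  · intro b hb
    obtain ⟨a, hap, hsub⟩ := exists_Ioc_subset_of_mem_nhds (hnear (Ioi_mem_nhds hb)) ⟨0, hp.1⟩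
    obtain ⟨ρ, haρ, hρp⟩ := exists_rat_btwn hap
    obtain ⟨hbρ, hρ⟩ := hsub ⟨haρ, hρp.le⟩
    filter_upwards [eventually_lt_orderStat hk hratio ((hF ρ hρ).comp hn) hρp] with i hi
    exact lt_trans hbρ hi
  · intro b hb
    obtain ⟨a, hpa, hsub⟩ := exists_Ico_subset_of_mem_nhds (hnear (Iio_mem_nhds hb)) ⟨1, hp.2⟩
    obtain ⟨ρ, hpρ, hρa⟩ := exists_rat_btwn hpa
    obtain ⟨hρb, hρ⟩ := hsub ⟨hpρ.le, hρa⟩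
    filter_upwards [eventually_orderStat_le hk hratio ((hF ρ hρ).comp hn) hpρ] with i hi
    exact hi.trans_lt hρb

end SampleQuantile

section StrongLaw

variable {Ω : Type*} [MeasurableSpace Ω] {μ : Measure Ω} [IsFiniteMeasure μ] {X : ℕ → Ω → ℝ}

theorem ae_tendsto_empiricalCDF (hindep : iIndepFun X μ)
    (hident : ∀ k, IdentDistrib (X k) (X 0) μ μ) (t : ℝ) :
    ∀ᵐ ω ∂μ, Tendsto (empiricalCDF (X · ω) · t) atTop (𝓝 (μ.real (X 0 ⁻¹' Set.Iic t))) := by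
  set g : ℝ → ℝ := (Set.Iic t).indicator 1
  have hg : Measurable g := measurable_one.indicator measurableSet_Iic
  have hX0 := (hident 0).aemeasurable_fst
  have hint : Integrable (g ∘ X 0) μ :=
    .of_bound (hg.comp_aemeasurable hX0).aestronglyMeasurable 1
      (.of_forall fun ω => by simp only [g, Function.comp, Set.indicator]; split_ifs <;> simp)
  have hmean : μ[g ∘ X 0] = μ.real (X 0 ⁻¹' Set.Iic t) := by
    rw [Function.comp_def, ← integral_map hX0 hg.aestronglyMeasurable,
      integral_indicator_one measurableSet_Iic,
      map_measureReal_apply_of_aemeasurable hX0 measurableSet_Iic]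
  have hslln := strong_law_ae_real (fun k => g ∘ X k) hint
    (fun i j hij => (hindep.indepFun hij).comp hg hg) (fun k => (hident k).comp hg)
  filter_upwards [hslln] with ω hω
  rw [← hmean]
  refine hω.congr fun m => ?_
  rw [empiricalCDF, Finset.card_filter, Nat.cast_sum, ← Fin.sum_univ_eq_sum_range]
  congr 1
  refine Finset.sum_congr rfl fun j _ => ?_
  simp only [Function.comp, g, Set.indicator_apply, Set.mem_Iic, Pi.one_apply]
  push_cast
  rfl

theorem ae_tendsto_orderStat (hindep : iIndepFun X μ)
    (hident : ∀ k, IdentDistrib (X k) (X 0) μ μ) {q : ℝ → ℝ}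
    (hcdf : ∀ ρ ∈ Set.Ioo (0 : ℝ) 1, μ.real (X 0 ⁻¹' Set.Iic (q ρ)) = ρ)
    {p : ℝ} (hp : p ∈ Set.Ioo 0 1) (hq : ContinuousAt q p) {n k : ℕ → ℕ}
    (hn : Tendsto n atTop atTop) (hratio : Tendsto (fun i => (k i : ℝ) / n i) atTop (𝓝 p)) :
    ∀ᵐ ω ∂μ, Tendsto (fun i => orderStat (n i) (fun j => X j ω) (k i)) atTop (𝓝 (q p)) := by
  have hF : ∀ᵐ ω ∂μ, ∀ ρ : ℚ, (ρ : ℝ) ∈ Set.Ioo 0 1 →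
      Tendsto (empiricalCDF (X · ω) · (q ρ)) atTop (𝓝 ρ) := by
    refine ae_all_iff.mpr fun ρ => ?_
    have h := ae_tendsto_empiricalCDF hindep hident (q ρ)
    filter_upwards [h] with ω hω hρ
    rwa [hcdf ρ hρ] at hω
  filter_upwards [hF] with ω hω
  exact tendsto_orderStat_of_tendsto_empiricalCDF (x := (X · ω)) hp hq hω hn hratio

end StrongLaw

theorem StrictMonoOn.measureReal_map_volume_Ioo_Iic {q : ℝ → ℝ} (hmeas : Measurable q)
    (hmono : StrictMonoOn q (Set.Ioo 0 1)) {p : ℝ} (hp : p ∈ Set.Ioo (0 : ℝ) 1) :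
    ((volume.restrict (Set.Ioo (0 : ℝ) 1)).map q).real (Set.Iic (q p)) = p := by
  have hpre : q ⁻¹' Set.Iic (q p) ∩ Set.Ioo 0 1 = Set.Ioc 0 p := by
    ext u
    simp only [Set.mem_inter_iff, Set.mem_preimage, Set.mem_Iic, Set.mem_Ioo, Set.mem_Ioc]
    constructor
    · rintro ⟨hle, hu0, hu1⟩
      exact ⟨hu0, (hmono.le_iff_le ⟨hu0, hu1⟩ hp).mp hle⟩
    · rintro ⟨hu0, hup⟩
      have hu : u ∈ Set.Ioo (0 : ℝ) 1 := ⟨hu0, hup.trans_lt hp.2⟩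
      exact ⟨(hmono.le_iff_le hu hp).mpr hup, hu⟩
  rw [map_measureReal_apply hmeas measurableSet_Iic,
    measureReal_restrict_apply' measurableSet_Ioo, hpre, Real.volume_real_Ioc_of_le hp.1.le,
    sub_zero]

section HillHorror

variable {α : ℝ}

theorem hillHorrorQuantile_one_sub (α u : ℝ) :
    hillHorrorQuantile α (1 - u) = -Real.log u / u ^ (1 / α) := by
  rw [hillHorrorQuantile, sub_sub_cancel]

theorem hillHorrorQuantile_pos {p : ℝ} (hp : p ∈ Set.Ioo (0 : ℝ) 1) :
    0 < hillHorrorQuantile α p := by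
  have h1p : 0 < 1 - p := sub_pos.mpr hp.2
  exact div_pos (neg_pos.mpr (Real.log_neg h1p (by linarith [hp.1])))
    (Real.rpow_pos_of_pos h1p _)

theorem measurable_hillHorrorQuantile (α : ℝ) : Measurable (hillHorrorQuantile α) := by
  unfold hillHorrorQuantile
  fun_prop

theorem continuousAt_hillHorrorQuantile {p : ℝ} (hp : p < 1) :
    ContinuousAt (hillHorrorQuantile α) p := by
  have h1p : 1 - p ≠ 0 := (sub_pos.mpr hp).ne'
  unfold hillHorrorQuantile
  exact ((continuousAt_const.sub continuousAt_id).log h1p).neg.div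
    ((continuousAt_const.sub continuousAt_id).rpow_const (Or.inl h1p))
    (Real.rpow_pos_of_pos (sub_pos.mpr hp) _).ne'

theorem hillHorrorQuantile_strictMonoOn (hα : 0 < α) :
    StrictMonoOn (hillHorrorQuantile α) (Set.Ioo 0 1) := by
  intro u hu v hv huv
  have h1u : 0 < 1 - u := sub_pos.mpr hu.2
  have h1v : 0 < 1 - v := sub_pos.mpr hv.2
  have hvu : 1 - v < 1 - u := by linarith
  unfold hillHorrorQuantile
  calc -Real.log (1 - u) / (1 - u) ^ (1 / α)
      _ ≤ -Real.log (1 - u) / (1 - v) ^ (1 / α) :=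
        div_le_div_of_nonneg_left (neg_nonneg.mpr (Real.log_nonpos h1u.le (by linarith [hu.1])))
          (Real.rpow_pos_of_pos h1v _) (Real.rpow_le_rpow h1v.le hvu.le (by positivity))
      _ < -Real.log (1 - v) / (1 - v) ^ (1 / α) :=
        div_lt_div_of_pos_right (neg_lt_neg (Real.log_lt_log h1v hvu)) (Real.rpow_pos_of_pos h1v _)

theorem hillHorrorQuantile_one_sub_div_one_sub {a b : ℝ} (ha : 0 < a) (hb : 0 < b) :
    hillHorrorQuantile α (1 - a) / hillHorrorQuantile α (1 - b) =
      Real.log a / Real.log b * (b / a) ^ (1 / α) := by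
  rw [hillHorrorQuantile_one_sub, hillHorrorQuantile_one_sub, Real.div_rpow hb.le ha.le]
  have := Real.rpow_pos_of_pos ha (1 / α)
  have := Real.rpow_pos_of_pos hb (1 / α)
  field_simp

theorem log_hillHorrorQuantile_div_add_log_one_sub_div_log {s : ℝ} (hs : 1 < s) :
    (Real.log (hillHorrorQuantile α (s / (s + 1)) / hillHorrorQuantile α (1 / (s + 1))) +
        Real.log (1 - Real.log s / Real.log (s + 1))) / Real.log s = 1 / α := by
  have hs0 : 0 < s := by linarith
  have hlogs : 0 < Real.log s := Real.log_pos hs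
  have hlogs1 : 0 < Real.log (s + 1) := Real.log_pos (by linarith)
  have hgap : 0 < Real.log (s + 1) - Real.log s :=
    sub_pos.mpr (Real.log_lt_log hs0 (by linarith))
  have hratio : hillHorrorQuantile α (s / (s + 1)) / hillHorrorQuantile α (1 / (s + 1)) =
      Real.log (s + 1) / (Real.log (s + 1) - Real.log s) * s ^ (1 / α) := by
    have h := hillHorrorQuantile_one_sub_div_one_sub (α := α)
      (a := 1 / (s + 1)) (b := s / (s + 1)) (by positivity) (by positivity)
    rw [show 1 - 1 / (s + 1) = s / (s + 1) by field_simp; ring,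
      show 1 - s / (s + 1) = 1 / (s + 1) by field_simp; ring,
      show s / (s + 1) / (1 / (s + 1)) = s by field_simp,
      show Real.log (1 / (s + 1)) = -Real.log (s + 1) by rw [one_div, Real.log_inv],
      Real.log_div hs0.ne' (by positivity)] at h
    rw [h, ← neg_sub (Real.log (s + 1)), neg_div_neg_eq]
  have hproduct : Real.log (s + 1) / (Real.log (s + 1) - Real.log s) * s ^ (1 / α) *
      (1 - Real.log s / Real.log (s + 1)) = s ^ (1 / α) := by
    field_simp
  have hcorr : 0 < 1 - Real.log s / Real.log (s + 1) :=
    sub_pos.mpr ((div_lt_one hlogs1).mpr (by linarith))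
  rw [hratio, ← Real.log_mul (by positivity) hcorr.ne', hproduct, Real.log_rpow hs0]
  field_simp

end HillHorror

theorem tendsto_natCast_mul_div_natCast_mul_sub_one (c : ℕ) {m : ℕ} (hm : 0 < m) :
    Tendsto (fun i : ℕ => ((i * c : ℕ) : ℝ) / ((i * m - 1 : ℕ) : ℝ)) atTop (𝓝 (c / m)) := by
  have hlim : Tendsto (fun i : ℕ => (c : ℝ) / (m - 1 / i)) atTop (𝓝 (c / (m - 0))) :=
    tendsto_const_nhds.div (tendsto_const_nhds.sub tendsto_one_div_atTop_nhds_zero_nat)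
      (by simp; omega)
  rw [sub_zero] at hlim
  refine hlim.congr' ?_
  filter_upwards [eventually_ge_atTop 1] with i hi
  have hi' : (1 : ℝ) ≤ i := by exact_mod_cast hi
  have him : 1 ≤ i * m := Nat.one_le_iff_ne_zero.mpr (by positivity)
  rw [Nat.cast_sub him]
  push_cast
  field_simp

/-- For fixed `s ≥ 2` and an i.i.d. sequence from the Hill-horror
distribution `HH(α)` (i.e. each `X_k` is distributed as the image of the uniform
distribution on `(0,1)` under `u ↦ -log(1-u)/(1-u)^{1/α}`), the estimators
`Q_{i,s}^{HH*} = [log(X_{(is,n)}/X_{(i,n)}) + log(1 - log s/log(s+1))]/log s`,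
computed from the first `n = i(s+1)-1` observations, converge almost surely to
`1/α` as `i → ∞`. -/
theorem stmt12 {Ω : Type*} [MeasurableSpace Ω] (μ : Measure Ω) [IsProbabilityMeasure μ]
    (s : ℕ) (hs : 2 ≤ s) (α : ℝ) (hα : 0 < α)
    (X : ℕ → Ω → ℝ) (hmeas : ∀ k, Measurable (X k))
    (hindep : iIndepFun X μ)
    (hdist : ∀ k, Measure.map (X k) μ =
      Measure.map (fun u => hillHorrorQuantile α u) (volume.restrict (Set.Ioo (0 : ℝ) 1))) :
    ∀ᵐ ω ∂μ, Tendsto (fun i : ℕ =>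
        (Real.log
          (orderStat (i * (s + 1) - 1) (fun j => X j ω) (i * s) /
            orderStat (i * (s + 1) - 1) (fun j => X j ω) i) +
          Real.log (1 - Real.log s / Real.log (s + 1))) / Real.log s)
      atTop (nhds (1 / α)) := by
  have hS : (1 : ℝ) < s := by exact_mod_cast hs
  have hident (k : ℕ) : IdentDistrib (X k) (X 0) μ μ :=
    ⟨(hmeas k).aemeasurable, (hmeas 0).aemeasurable, by rw [hdist, hdist]⟩
  have hcdf (ρ : ℝ) (hρ : ρ ∈ Set.Ioo (0 : ℝ) 1) :
      μ.real (X 0 ⁻¹' Set.Iic (hillHorrorQuantile α ρ)) = ρ := by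
    rw [← map_measureReal_apply (hmeas 0) measurableSet_Iic, hdist 0]
    exact (hillHorrorQuantile_strictMonoOn hα).measureReal_map_volume_Ioo_Iic
      (measurable_hillHorrorQuantile α) hρ
  have hn : Tendsto (fun i : ℕ => i * (s + 1) - 1) atTop atTop :=
    (tendsto_sub_atTop_nat 1).comp (tendsto_id.atTop_mul_const' s.succ_pos)
  have hlow : 1 / ((s : ℝ) + 1) ∈ Set.Ioo (0 : ℝ) 1 :=
    ⟨by positivity, (div_lt_one (by positivity)).mpr (by linarith)⟩
  have hhigh : (s : ℝ) / (s + 1) ∈ Set.Ioo (0 : ℝ) 1 :=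
    ⟨by positivity, (div_lt_one (by positivity)).mpr (by linarith)⟩
  have hX1 := ae_tendsto_orderStat hindep hident hcdf hlow
    (continuousAt_hillHorrorQuantile hlow.2) hn (k := fun i => i)
    (by simpa using tendsto_natCast_mul_div_natCast_mul_sub_one 1 s.succ_pos)
  have hXs := ae_tendsto_orderStat hindep hident hcdf hhigh
    (continuousAt_hillHorrorQuantile hhigh.2) hn (k := fun i => i * s)
    (by simpa using tendsto_natCast_mul_div_natCast_mul_sub_one s s.succ_pos)
  filter_upwards [hX1, hXs] with ω hω1 hω2
  rw [← log_hillHorrorQuantile_div_add_log_one_sub_div_log (α := α) hS]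
  exact (((hω2.div hω1 (hillHorrorQuantile_pos hlow).ne').log
    (div_pos (hillHorrorQuantile_pos hhigh) (hillHorrorQuantile_pos hlow)).ne').add_const
    _).div_const _
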